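/- Fix σ ∈ (0,2), m ≥ 1, Δx > 0, Δt > 0, integers I, K ≥ 2 and J ≥ 1. Let f_0, …, f_I be nonnegative reals, set B₀ = max_i f_i and b_max = B₀^m, and assume the CFL condition ν_σ · m · B₀^{m−1} · Δt ≤ Δx^σ. Suppose grid functions W_0, W_1, …, W_J satisfy: L_σ^D W_j = 0 at every interior node and W_j = 0 at every node of Γ_h, for every j; (W_0)_i^0 = f_i^m for 0 ≤ i ≤ I; and for every 1 ≤ j ≤ J and 0 < i < I, (W_j)_i^0 = [ ν_σ (Δt/Δx^σ) ((W_{j−1})_i^1 − (W_{j−1})_i^0) + ((W_{j−1})_i^0)^{1/m} ]^m, where s^{1/m} denotes the real m-th root of s ≥ 0 (in particular, part of the claim is that all quantities inside the roots and brackets remain nonnegative). Then 0 ≤ (W_j)_i^k ≤ b_max for all i, k, j. -/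

import Mathlib

/-! At each time level the grid function is `L_σ^D`-harmonic, and the stencil puts the positive
weight `k + 1 - σ` on the node above, so a maximum is pushed up to the row `k = K`, where the
solution vanishes: the values lie between `0` and the extremes of the bottom row. The bottom row is
updated by `(λ (v₁ - v₀) + v₀^{1/m})^m`; writing `v₀ = u^m` with `u ≤ B₀`, the CFL condition
`λ m B₀^{m-1} ≤ 1` and the tangent-line inequality for `x ↦ x^m` keep the bracket in `[0, B₀]`,
so the bound `[0, B₀^m]` propagates in time. -/

open Finset

/-- `ν_σ = σ μ_σ` with `μ_σ = 2^{σ-1} Γ(σ/2) / Γ(1-σ/2)`. -/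
noncomputable def nuSigma (σ : ℝ) : ℝ :=
  σ * (2 ^ (σ - 1) * Real.Gamma (σ / 2) / Real.Gamma (1 - σ / 2))

lemma nuSigma_pos {σ : ℝ} (hσ : σ ∈ Set.Ioo (0 : ℝ) 2) : 0 < nuSigma σ := by
  obtain ⟨hσ0, hσ2⟩ := hσ
  have hΓ₁ : 0 < Real.Gamma (σ / 2) := Real.Gamma_pos_of_pos (by linarith)
  have hΓ₂ : 0 < Real.Gamma (1 - σ / 2) := Real.Gamma_pos_of_pos (by linarith)
  have hpow : (0 : ℝ) < 2 ^ (σ - 1) := by positivity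
  unfold nuSigma
  positivity

/-- `L_σ^D V` at the node `(i, k)`, with `y_k = k Δx`. -/
noncomputable def extensionOp (σ Δx : ℝ) (V : ℕ → ℕ → ℝ) (i k : ℕ) : ℝ :=
  ((k : ℝ) * Δx) ^ (1 - σ) *
      (V (i+1) k + V (i-1) k + V i (k+1) + V i (k-1) - 4 * V i k) / Δx ^ 2
    + (1 - σ) * ((k : ℝ) * Δx) ^ (-σ) * (V i (k+1) - V i k) / Δx

lemma extensionOp_neg (σ Δx : ℝ) (V : ℕ → ℕ → ℝ) (i k : ℕ) :
    extensionOp σ Δx (fun i k => -V i k) i k = -extensionOp σ Δx V i k := by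
  unfold extensionOp
  ring

/-- Multiplying `L_σ^D V = 0` by `y_k^σ Δx` clears the singular weights. -/
lemma extensionOp_eq_zero_iff {σ Δx : ℝ} (hΔx : 0 < Δx) (V : ℕ → ℕ → ℝ) (i : ℕ) {k : ℕ}
    (hk : 0 < k) :
    extensionOp σ Δx V i k = 0 ↔
      (k : ℝ) * (V (i+1) k + V (i-1) k + V i (k+1) + V i (k-1) - 4 * V i k)
        + (1 - σ) * (V i (k+1) - V i k) = 0 := by
  have hy : (0 : ℝ) < k * Δx := by positivity
  have hsplit : ((k : ℝ) * Δx) ^ (1 - σ) = (k * Δx) * ((k : ℝ) * Δx) ^ (-σ) := by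
    rw [sub_eq_add_neg, Real.rpow_add hy, Real.rpow_one]
  have hw : 0 < ((k : ℝ) * Δx) ^ (-σ) := Real.rpow_pos_of_pos hy _
  have hfactor : extensionOp σ Δx V i k = ((k : ℝ) * Δx) ^ (-σ) / Δx *
      ((k : ℝ) * (V (i+1) k + V (i-1) k + V i (k+1) + V i (k-1) - 4 * V i k)
        + (1 - σ) * (V i (k+1) - V i k)) := by
    unfold extensionOp
    rw [hsplit]
    field_simp
  rw [hfactor, mul_eq_zero, or_iff_right (div_pos hw hΔx).ne']

/-- `c` is the centre node and `e, w, s, n` its east, west, south and north neighbours. -/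
lemma up_eq_of_stencil_of_le {σ : ℝ} (hσ : σ < 2) {k : ℝ} (hk : 1 ≤ k)
    {c e w s n M : ℝ}
    (hstencil : k * (e + w + n + s - 4 * c) + (1 - σ) * (n - c) = 0) (hc : c = M)
    (he : e ≤ M) (hw : w ≤ M) (hs : s ≤ M) (hn : n ≤ M) : n = M := by
  subst hc
  refine le_antisymm hn ?_
  by_contra! hlt
  nlinarith [mul_le_mul_of_nonneg_left (add_le_add (add_le_add he hw) hs)
    (by linarith : (0 : ℝ) ≤ k)]

section MaximumPrinciple

variable {σ Δx : ℝ} {I K : ℕ} {V : ℕ → ℕ → ℝ}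

/-- Among the maximum points take one in the highest row; it cannot be interior, since the node
above it would be a higher maximum point. -/
theorem le_of_extensionOp_eq_zero (hσ : σ < 2) (hΔx : 0 < Δx)
    (hharm : ∀ i k, 0 < i → i < I → 0 < k → k < K → extensionOp σ Δx V i k = 0)
    (hlat : ∀ i k, i ≤ I → k ≤ K → (i = 0 ∨ i = I ∨ k = K) → V i k = 0)
    {b : ℝ} (hb : 0 ≤ b) (hbot : ∀ i ≤ I, V i 0 ≤ b) :
    ∀ i ≤ I, ∀ k ≤ K, V i k ≤ b := by
  set grid := range (I+1) ×ˢ range (K+1)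
  have hgrid : ∀ {i k}, (i, k) ∈ grid ↔ i ≤ I ∧ k ≤ K := by
    simp [grid]
  have hne : grid.Nonempty := ⟨(0, 0), hgrid.2 ⟨I.zero_le, K.zero_le⟩⟩
  set M := grid.sup' hne (fun p => V p.1 p.2)
  have hleM : ∀ i ≤ I, ∀ k ≤ K, V i k ≤ M := fun i hi k hk =>
    le_sup' (fun p : ℕ × ℕ => V p.1 p.2) (hgrid.2 ⟨hi, hk⟩)
  suffices hMb : M ≤ b from fun i hi k hk => (hleM i hi k hk).trans hMb
  obtain ⟨p₀, hp₀, hp₀M⟩ := exists_mem_eq_sup' hne (fun p : ℕ × ℕ => V p.1 p.2)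
  obtain ⟨⟨i, k⟩, hmax, htop⟩ := exists_max_image (grid.filter fun p => V p.1 p.2 = M)
    Prod.snd ⟨p₀, mem_filter.2 ⟨hp₀, hp₀M.symm⟩⟩
  obtain ⟨hik, hVM⟩ := mem_filter.1 hmax
  obtain ⟨hi, hk⟩ := hgrid.1 hik
  rw [← hVM]
  by_cases hΓh : i = 0 ∨ i = I ∨ k = K
  · exact (hlat i k hi hk hΓh).trans_le hb
  rcases Nat.eq_zero_or_pos k with rfl | hk0
  · exact hbot i hi
  exfalso
  have hstencil := (extensionOp_eq_zero_iff hΔx V i hk0).1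
    (hharm i k (by omega) (by omega) hk0 (by omega))
  have hup := up_eq_of_stencil_of_le hσ (by exact_mod_cast hk0) hstencil hVM
    (hleM _ (by omega) k hk) (hleM _ (by omega) k hk) (hleM i hi _ (by omega))
    (hleM i hi _ (by omega))
  have := htop (i, k+1) (mem_filter.2 ⟨hgrid.2 ⟨hi, by omega⟩, hup⟩)
  omega

theorem mem_Icc_of_extensionOp_eq_zero (hσ : σ < 2) (hΔx : 0 < Δx)
    (hharm : ∀ i k, 0 < i → i < I → 0 < k → k < K → extensionOp σ Δx V i k = 0)
    (hlat : ∀ i k, i ≤ I → k ≤ K → (i = 0 ∨ i = I ∨ k = K) → V i k = 0)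
    {b : ℝ} (hbot : ∀ i ≤ I, V i 0 ∈ Set.Icc 0 b) :
    ∀ i ≤ I, ∀ k ≤ K, V i k ∈ Set.Icc 0 b := by
  have hb : 0 ≤ b := (hbot 0 I.zero_le).1.trans (hbot 0 I.zero_le).2
  have hupper := le_of_extensionOp_eq_zero hσ hΔx hharm hlat hb fun i hi => (hbot i hi).2
  have hlower := le_of_extensionOp_eq_zero (V := fun i k => -V i k) hσ hΔx
    (fun i k h₁ h₂ h₃ h₄ => by rw [extensionOp_neg, hharm i k h₁ h₂ h₃ h₄, neg_zero])
    (fun i k h₁ h₂ h₃ => by rw [hlat i k h₁ h₂ h₃, neg_zero]) le_rfl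
    (fun i hi => neg_nonpos.2 (hbot i hi).1)
  exact fun i hi k hk => ⟨neg_nonpos.1 (hlower i hi k hk), hupper i hi k hk⟩

end MaximumPrinciple

/-- Bernoulli's inequality `(u / B)^m ≥ 1 + m (u / B - 1)`, multiplied by `B^m`. -/
lemma rpow_sub_rpow_le_mul_sub {m u B : ℝ} (hm : 1 ≤ m) (hu : 0 ≤ u) (huB : u ≤ B) :
    B ^ m - u ^ m ≤ m * B ^ (m - 1) * (B - u) := by
  rcases (hu.trans huB).eq_or_lt with rfl | hB
  · obtain rfl : u = 0 := le_antisymm huB hu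
    simp
  have hbern := one_add_mul_self_le_rpow_one_add
    (by linarith [div_nonneg hu hB.le] : (-1 : ℝ) ≤ u / B - 1) hm
  rw [add_sub_cancel, Real.div_rpow hu hB.le, le_div_iff₀ (by positivity)] at hbern
  have hBm : B ^ m = B ^ (m - 1) * B := by
    rw [Real.rpow_sub_one hB.ne', div_mul_cancel₀ _ hB.ne']
  have hexpand : (1 + m * (u / B - 1)) * B ^ m = B ^ m - m * B ^ (m - 1) * (B - u) := by
    rw [hBm]
    field_simp
    ring
  linarith

/-- The bracket of the boundary update; the scheme has `lam = ν_σ Δt / Δx^σ`. -/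
noncomputable def boundaryUpdate (lam m v₀ v₁ : ℝ) : ℝ :=
  lam * (v₁ - v₀) + v₀ ^ (1 / m)

section BoundaryUpdate

variable {lam m B v₀ v₁ : ℝ}

lemma rpow_one_div_mem_Icc (hm : 1 ≤ m) (hB : 0 ≤ B) (hv₀ : v₀ ∈ Set.Icc 0 (B ^ m)) :
    v₀ ^ (1 / m) ∈ Set.Icc 0 B ∧ (v₀ ^ (1 / m)) ^ m = v₀ := by
  have hm0 : m ≠ 0 := by positivity
  rw [one_div]
  refine ⟨⟨Real.rpow_nonneg hv₀.1 _, ?_⟩, Real.rpow_inv_rpow hv₀.1 hm0⟩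
  calc v₀ ^ m⁻¹ ≤ (B ^ m) ^ m⁻¹ := Real.rpow_le_rpow hv₀.1 hv₀.2 (by positivity)
    _ = B := Real.rpow_rpow_inv hB hm0

/-- The bracket stays nonnegative: `v₀ = u^m` is decreased by at most `λ u^m ≤ u`. -/
lemma boundaryUpdate_nonneg (hm : 1 ≤ m) (hB : 0 ≤ B) (hlam : 0 ≤ lam)
    (hcfl : lam * m * B ^ (m - 1) ≤ 1)
    (hv₀ : v₀ ∈ Set.Icc 0 (B ^ m)) (hv₁ : 0 ≤ v₁) :
    0 ≤ boundaryUpdate lam m v₀ v₁ := by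
  unfold boundaryUpdate
  obtain ⟨⟨hu, huB⟩, hum⟩ := rpow_one_div_mem_Icc hm hB hv₀
  set u := v₀ ^ (1 / m)
  have hsmall : lam * u ^ (m - 1) ≤ 1 := by
    have : u ^ (m - 1) ≤ B ^ (m - 1) := Real.rpow_le_rpow hu huB (by linarith)
    nlinarith [mul_nonneg hlam (Real.rpow_nonneg hB (m - 1))]
  have humul : u ^ m = u ^ (m - 1) * u := by
    rcases hu.eq_or_lt with h | h
    · rw [← h, Real.zero_rpow (by positivity), mul_zero]
    · rw [← Real.rpow_add_one h.ne', sub_add_cancel]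
  rw [← hum, humul]
  nlinarith [mul_nonneg hlam hv₁, mul_nonneg hu (sub_nonneg.2 hsmall)]

lemma boundaryUpdate_le (hm : 1 ≤ m) (hB : 0 ≤ B) (hlam : 0 ≤ lam)
    (hcfl : lam * m * B ^ (m - 1) ≤ 1)
    (hv₀ : v₀ ∈ Set.Icc 0 (B ^ m)) (hv₁ : v₁ ≤ B ^ m) :
    boundaryUpdate lam m v₀ v₁ ≤ B := by
  unfold boundaryUpdate
  obtain ⟨⟨hu, huB⟩, hum⟩ := rpow_one_div_mem_Icc hm hB hv₀
  set u := v₀ ^ (1 / m)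
  have htangent := rpow_sub_rpow_le_mul_sub hm hu huB
  rw [← hum]
  calc lam * (v₁ - u ^ m) + u ≤ lam * (m * B ^ (m - 1) * (B - u)) + u := by
        gcongr
        linarith
    _ = (lam * m * B ^ (m - 1)) * (B - u) + u := by ring
    _ ≤ 1 * (B - u) + u := by gcongr
    _ = B := by ring

lemma rpow_boundaryUpdate_mem_Icc (hm : 1 ≤ m) (hB : 0 ≤ B) (hlam : 0 ≤ lam)
    (hcfl : lam * m * B ^ (m - 1) ≤ 1)
    (hv₀ : v₀ ∈ Set.Icc 0 (B ^ m)) (hv₁ : v₁ ∈ Set.Icc 0 (B ^ m)) :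
    boundaryUpdate lam m v₀ v₁ ^ m ∈ Set.Icc 0 (B ^ m) := by
  have hnonneg := boundaryUpdate_nonneg hm hB hlam hcfl hv₀ hv₁.1
  exact ⟨by positivity, Real.rpow_le_rpow hnonneg
    (boundaryUpdate_le hm hB hlam hcfl hv₀ hv₁.2) (by linarith)⟩

end BoundaryUpdate

theorem scheme_mem_Icc {σ Δx lam m B : ℝ} (hσ : σ < 2) (hΔx : 0 < Δx) (hm : 1 ≤ m)
    (hB : 0 ≤ B) (hlam : 0 ≤ lam) (hcfl : lam * m * B ^ (m - 1) ≤ 1)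
    {I K J : ℕ} (hK : 1 ≤ K) {W : ℕ → ℕ → ℕ → ℝ}
    (hharm : ∀ j ≤ J, ∀ i k, 0 < i → i < I → 0 < k → k < K → extensionOp σ Δx (W j) i k = 0)
    (hlat : ∀ j ≤ J, ∀ i k, i ≤ I → k ≤ K → (i = 0 ∨ i = I ∨ k = K) → W j i k = 0)
    (hinit : ∀ i ≤ I, W 0 i 0 ∈ Set.Icc 0 (B ^ m))
    (hupd : ∀ j, j + 1 ≤ J → ∀ i, 0 < i → i < I →
      W (j+1) i 0 = boundaryUpdate lam m (W j i 0) (W j i 1) ^ m) :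
    ∀ j ≤ J, ∀ i ≤ I, ∀ k ≤ K, W j i k ∈ Set.Icc 0 (B ^ m) := by
  intro j hj
  refine mem_Icc_of_extensionOp_eq_zero hσ hΔx (hharm j hj) (hlat j hj) ?_
  induction j with
  | zero => exact hinit
  | succ j ih =>
    have hgrid := mem_Icc_of_extensionOp_eq_zero hσ hΔx (hharm j (by omega)) (hlat j (by omega))
      (ih (by omega))
    intro i hi
    by_cases hΓh : i = 0 ∨ i = I
    · rw [hlat (j+1) hj i 0 hi K.zero_le (by tauto)]
      exact ⟨le_rfl, by positivity⟩
    rw [hupd j hj i (by omega) (by omega)]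
    exact rpow_boundaryUpdate_mem_Icc hm hB hlam hcfl (hgrid i hi 0 K.zero_le) (hgrid i hi 1 hK)

theorem stmt10 (σ m Δx Δt : ℝ) (hσ : σ ∈ Set.Ioo (0:ℝ) 2) (hm : 1 ≤ m)
    (hΔx : 0 < Δx) (hΔt : 0 < Δt) (I K J : ℕ) (hK : 2 ≤ K)
    (f : ℕ → ℝ) (hf : ∀ i ≤ I, 0 ≤ f i)
    (B₀ : ℝ)
    (hB₀ : B₀ = (Finset.range (I+1)).sup'
      (Finset.nonempty_range_iff.mpr (Nat.succ_ne_zero I)) f)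
    (bmax : ℝ) (hbmax : bmax = B₀ ^ m)
    (hcfl : nuSigma σ * m * B₀ ^ (m - 1) * Δt ≤ Δx ^ σ)
    (W : ℕ → ℕ → ℕ → ℝ)
    (hharm : ∀ j ≤ J, ∀ i k, 0 < i → i < I → 0 < k → k < K →
      ((k : ℝ) * Δx) ^ (1 - σ) *
          (W j (i+1) k + W j (i-1) k + W j i (k+1) + W j i (k-1) - 4 * W j i k) / Δx ^ 2
        + (1 - σ) * ((k : ℝ) * Δx) ^ (-σ) * (W j i (k+1) - W j i k) / Δx = 0)
    (hlat : ∀ j ≤ J, ∀ i k, i ≤ I → k ≤ K → (i = 0 ∨ i = I ∨ k = K) → W j i k = 0)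
    (hinit : ∀ i ≤ I, W 0 i 0 = (f i) ^ m)
    (hupd : ∀ j, 1 ≤ j → j ≤ J → ∀ i, 0 < i → i < I →
      W j i 0 = (nuSigma σ * (Δt / Δx ^ σ) * (W (j-1) i 1 - W (j-1) i 0)
        + (W (j-1) i 0) ^ (1/m)) ^ m) :
    (∀ j ≤ J, ∀ i ≤ I, ∀ k ≤ K, 0 ≤ W j i k ∧ W j i k ≤ bmax)
    ∧ (∀ j, 1 ≤ j → j ≤ J → ∀ i, 0 < i → i < I →
        0 ≤ nuSigma σ * (Δt / Δx ^ σ) * (W (j-1) i 1 - W (j-1) i 0)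
          + (W (j-1) i 0) ^ (1/m)) := by
  subst hbmax
  have hfB₀ : ∀ i ≤ I, f i ≤ B₀ := fun i hi => hB₀ ▸ le_sup' f (mem_range.2 (by omega))
  have hB₀0 : 0 ≤ B₀ := (hf 0 I.zero_le).trans (hfB₀ 0 I.zero_le)
  have hlam : 0 ≤ nuSigma σ * (Δt / Δx ^ σ) := by
    have := nuSigma_pos hσ
    positivity
  have hcfl' : nuSigma σ * (Δt / Δx ^ σ) * m * B₀ ^ (m - 1) ≤ 1 := by
    rw [← div_le_one (by positivity)] at hcfl
    linarith [show nuSigma σ * (Δt / Δx ^ σ) * m * B₀ ^ (m - 1)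
      = nuSigma σ * m * B₀ ^ (m - 1) * Δt / Δx ^ σ by ring]
  have hbounds := scheme_mem_Icc hσ.2 hΔx hm hB₀0 hlam hcfl' (by omega : 1 ≤ K) hharm hlat
    (fun i hi => hinit i hi ▸ ⟨by have := hf i hi; positivity,
      Real.rpow_le_rpow (hf i hi) (hfB₀ i hi) (by linarith)⟩)
    (fun j hj i hi₀ hiI => hupd (j+1) (by omega) hj i hi₀ hiI)
  refine ⟨hbounds, fun j hj₁ hjJ i hi₀ hiI => ?_⟩
  obtain ⟨j, rfl⟩ := Nat.exists_eq_add_of_le' hj₁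
  exact boundaryUpdate_nonneg hm hB₀0 hlam hcfl' (hbounds j (by omega) i (by omega) 0 K.zero_le)
    (hbounds j (by omega) i (by omega) 1 (by omega)).1
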